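/- arXiv:1309.0003 — 5 statements merged into one kernel-verified Lean document; each statement's English description precedes it below -/
import Mathlib

section
/- Let X_1, ..., X_n be independent random vectors of dimension k, where X_i = (X_{1,i}, ..., X_{k,i}), such that for every i, X_{ℓ,i} ≥ 0 for all ℓ = 1, ..., k and Σ_{ℓ=1}^k X_{ℓ,i} ≤ 1. Let X̄_n = (1/n) Σ_{i=1}^n X_i, let μ_ℓ = (1/n) Σ_{i=1}^n E[X_{ℓ,i}] for ℓ = 1, ..., k, and set μ_0 = 1 − Σ_{ℓ=1}^k μ_ℓ. Let z_0, z_1, ..., z_k be positive real numbers with Σ_{ℓ=0}^k z_ℓ = 1, and suppose z_ℓ ≤ μ_ℓ for all ℓ = 1, ..., k. Then Pr{X̄_n ≤ z componentwise} ≤ ∏_{ℓ=0}^k (μ_ℓ / z_ℓ)^{n z_ℓ}, where z = (z_1, ..., z_k). -/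
/-!
Chernoff's method with the multiplicative weights `t ℓ = θ z ℓ / μ ℓ`, where `θ = μ₀ / z₀`.
Since `z ≤ μ` and hence `μ₀ ≤ z₀`, every `t ℓ` lies in `(0, 1]`, so on the event `X̄ₙ ≤ z`
the product `∏ ℓ t ℓ ^ (∑ i X i ℓ)` is at least `∏ ℓ t ℓ ^ (n z ℓ)`. By independence its
expectation factorizes over `i`; weighted AM-GM with weights `X i ℓ` and the slack weight
`1 - ∑ ℓ X i ℓ` (at value `1`) bounds each factor by `1 - ∑ ℓ E[X i ℓ] (1 - t ℓ)`,
and unweighted AM-GM bounds their product by `(1 - ∑ ℓ μ ℓ (1 - t ℓ)) ^ n = θ ^ n`.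
Markov's inequality then gives the bound. If `μ₀ ≤ 0`, the coordinates of each `X i` sum to `1`
almost surely, which the event `X̄ₙ ≤ z` rules out because `∑ ℓ z ℓ < 1`.
-/

open MeasureTheory ProbabilityTheory Finset

theorem prod_rpow_le_one_sub_sum_mul {κ : Type*} [Fintype κ] {x t : κ → ℝ}
    (hx : ∀ ℓ, 0 ≤ x ℓ) (hxs : ∑ ℓ, x ℓ ≤ 1) (ht : ∀ ℓ, 0 ≤ t ℓ) :
    ∏ ℓ, t ℓ ^ x ℓ ≤ 1 - ∑ ℓ, x ℓ * (1 - t ℓ) := by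
  have h := Real.geom_mean_le_arith_mean_weighted univ
    (fun o : Option κ => o.elim (1 - ∑ ℓ, x ℓ) x) (fun o => o.elim 1 t)
    (by rintro (_ | ℓ) _ <;> simp [hxs, hx]) (by simp [Fintype.sum_option])
    (by rintro (_ | ℓ) _ <;> simp [ht])
  simpa [Fintype.prod_option, Fintype.sum_option, mul_sub, sub_add] using h

theorem prod_le_arith_mean_pow {ι : Type*} (s : Finset ι) {a : ι → ℝ} (ha : ∀ i ∈ s, 0 ≤ a i) :
    ∏ i ∈ s, a i ≤ ((∑ i ∈ s, a i) / #s) ^ #s := by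
  rcases s.eq_empty_or_nonempty with rfl | hs
  · simp
  have h := Real.geom_mean_le_arith_mean s (fun _ => 1) a (fun _ _ => zero_le_one)
    (by simpa using hs) ha
  simp only [Real.rpow_one, sum_const, nsmul_eq_mul, mul_one, one_mul] at h
  calc ∏ i ∈ s, a i = ((∏ i ∈ s, a i) ^ ((#s : ℝ)⁻¹)) ^ #s :=
        (Real.rpow_inv_natCast_pow (prod_nonneg ha) hs.card_pos.ne').symm
    _ ≤ _ := pow_le_pow_left₀ (Real.rpow_nonneg (prod_nonneg ha) _) h _

section Simplex

variable {Ω ι κ : Type*} [MeasurableSpace Ω] {P : Measure Ω} [IsProbabilityMeasure P]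
  [Fintype ι] [Fintype κ]

theorem integrable_of_nonneg_of_le_one {f : Ω → ℝ} (hf : Measurable f) (h0 : ∀ ω, 0 ≤ f ω)
    (h1 : ∀ ω, f ω ≤ 1) : Integrable f P :=
  .of_bound hf.aestronglyMeasurable 1 (ae_of_all _ fun ω => by
    rw [Real.norm_of_nonneg (h0 ω)]; exact h1 ω)

theorem measure_lt_eq_zero_of_le_integral {f : Ω → ℝ} {c : ℝ} (hf : Integrable f P)
    (hle : ∀ ω, f ω ≤ c) (hc : c ≤ ∫ ω, f ω ∂P) : P {ω | f ω < c} = 0 := by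
  have hnonneg : 0 ≤ fun ω => c - f ω := fun ω => sub_nonneg.2 (hle ω)
  have hint : ∫ ω, (c - f ω) ∂P = 0 := by
    refine le_antisymm ?_ (integral_nonneg hnonneg)
    rw [integral_sub (integrable_const c) hf, integral_const, probReal_univ, one_smul]
    linarith
  have hae := (integral_eq_zero_iff_of_nonneg hnonneg ((integrable_const c).sub hf)).1 hint
  rw [Filter.EventuallyEq, ae_iff] at hae
  simpa [sub_eq_zero, ne_comm, lt_iff_le_and_ne, hle] using hae

theorem integrable_of_sum_le_one {Y : κ → Ω → ℝ} (hmeas : ∀ ℓ, Measurable (Y ℓ))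
    (hnonneg : ∀ ℓ ω, 0 ≤ Y ℓ ω) (hsum : ∀ ω, ∑ ℓ, Y ℓ ω ≤ 1) (ℓ : κ) : Integrable (Y ℓ) P :=
  integrable_of_nonneg_of_le_one (hmeas ℓ) (hnonneg ℓ) fun ω =>
    (single_le_sum (fun ℓ' _ => hnonneg ℓ' ω) (mem_univ ℓ)).trans (hsum ω)

theorem integral_prod_rpow_le {Y : κ → Ω → ℝ} (hmeas : ∀ ℓ, Measurable (Y ℓ))
    (hnonneg : ∀ ℓ ω, 0 ≤ Y ℓ ω) (hsum : ∀ ω, ∑ ℓ, Y ℓ ω ≤ 1) {t : κ → ℝ} (ht : ∀ ℓ, 0 ≤ t ℓ) :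
    ∫ ω, ∏ ℓ, t ℓ ^ Y ℓ ω ∂P ≤ 1 - ∑ ℓ, (∫ ω, Y ℓ ω ∂P) * (1 - t ℓ) := by
  have hint : ∀ ℓ, Integrable (fun ω => Y ℓ ω * (1 - t ℓ)) P := fun ℓ =>
    (integrable_of_sum_le_one hmeas hnonneg hsum ℓ).mul_const _
  calc ∫ ω, ∏ ℓ, t ℓ ^ Y ℓ ω ∂P ≤ ∫ ω, (1 - ∑ ℓ, Y ℓ ω * (1 - t ℓ)) ∂P :=
        integral_mono_of_nonneg
          (ae_of_all _ fun ω => prod_nonneg fun ℓ _ => Real.rpow_nonneg (ht ℓ) _)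
          ((integrable_const 1).sub (integrable_finsetSum _ fun ℓ _ => hint ℓ))
          (ae_of_all _ fun ω => prod_rpow_le_one_sub_sum_mul (hnonneg · ω) (hsum ω) ht)
    _ = 1 - ∑ ℓ, (∫ ω, Y ℓ ω ∂P) * (1 - t ℓ) := by
        rw [integral_sub (integrable_const 1) (integrable_finsetSum _ fun ℓ _ => hint ℓ),
          integral_const, probReal_univ, one_smul, integral_finsetSum _ fun ℓ _ => hint ℓ]
        simp_rw [integral_mul_const]

variable {X : ι → κ → Ω → ℝ}

theorem measure_forall_sum_le_eq_zero [Nonempty ι] (hmeas : ∀ i ℓ, Measurable (X i ℓ))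
    (hnonneg : ∀ i ℓ ω, 0 ≤ X i ℓ ω) (hsum : ∀ i ω, ∑ ℓ, X i ℓ ω ≤ 1) {b : κ → ℝ}
    (hb : ∑ ℓ, b ℓ < Fintype.card ι)
    (hmean : 1 ≤ ∑ ℓ, (∑ i, ∫ ω, X i ℓ ω ∂P) / Fintype.card ι) :
    P {ω | ∀ ℓ, ∑ i, X i ℓ ω ≤ b ℓ} = 0 := by
  have hint : ∀ i ℓ, Integrable (X i ℓ) P := fun i =>
    integrable_of_sum_le_one (hmeas i) (hnonneg i) (hsum i)
  have hle : ∀ ω, ∑ i, ∑ ℓ, X i ℓ ω ≤ Fintype.card ι := fun ω => by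
    simpa using sum_le_sum fun i (_ : i ∈ univ) => hsum i ω
  have hcard : (0 : ℝ) < Fintype.card ι := Nat.cast_pos.2 Fintype.card_pos
  rw [← sum_div, le_div_iff₀ hcard, one_mul, sum_comm] at hmean
  refine measure_mono_null (fun ω hω => ?_) (measure_lt_eq_zero_of_le_integral
    (integrable_finsetSum _ fun i _ => integrable_finsetSum _ fun ℓ _ => hint i ℓ) hle ?_)
  · calc ∑ i, ∑ ℓ, X i ℓ ω = ∑ ℓ, ∑ i, X i ℓ ω := sum_comm
      _ ≤ ∑ ℓ, b ℓ := sum_le_sum fun ℓ _ => hω ℓ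
      _ < Fintype.card ι := hb
  · rwa [integral_finsetSum _ fun i _ => integrable_finsetSum _ fun ℓ _ => hint i ℓ,
      sum_congr rfl fun i _ => integral_finsetSum _ fun ℓ _ => hint i ℓ]

theorem integral_prod_prod_rpow_le [Nonempty ι] (hmeas : ∀ i ℓ, Measurable (X i ℓ))
    (hindep : iIndepFun (fun i ω ℓ => X i ℓ ω) P) (hnonneg : ∀ i ℓ ω, 0 ≤ X i ℓ ω)
    (hsum : ∀ i ω, ∑ ℓ, X i ℓ ω ≤ 1) {t : κ → ℝ} (ht : ∀ ℓ, 0 ≤ t ℓ) :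
    ∫ ω, ∏ i, ∏ ℓ, t ℓ ^ X i ℓ ω ∂P ≤
      (1 - ∑ ℓ, ((∑ i, ∫ ω, X i ℓ ω ∂P) / Fintype.card ι) * (1 - t ℓ)) ^ Fintype.card ι := by
  have hfactor : ∀ i, ∫ ω, ∏ ℓ, t ℓ ^ X i ℓ ω ∂P ≤
      1 - ∑ ℓ, (∫ ω, X i ℓ ω ∂P) * (1 - t ℓ) := fun i =>
    integral_prod_rpow_le (hmeas i) (hnonneg i) (hsum i) ht
  have hfactor_nonneg : ∀ i, 0 ≤ ∫ ω, ∏ ℓ, t ℓ ^ X i ℓ ω ∂P := fun i =>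
    integral_nonneg fun ω => prod_nonneg fun ℓ _ => Real.rpow_nonneg (ht ℓ) _
  calc ∫ ω, ∏ i, ∏ ℓ, t ℓ ^ X i ℓ ω ∂P = ∏ i, ∫ ω, ∏ ℓ, t ℓ ^ X i ℓ ω ∂P :=
        hindep.integral_fun_prod_comp (f := fun _ v => ∏ ℓ, t ℓ ^ v ℓ) (fun i => by fun_prop)
          fun i => (by fun_prop : Measurable fun v : κ → ℝ => ∏ ℓ, t ℓ ^ v ℓ).aestronglyMeasurable
    _ ≤ ∏ i, (1 - ∑ ℓ, (∫ ω, X i ℓ ω ∂P) * (1 - t ℓ)) :=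
        prod_le_prod (fun i _ => hfactor_nonneg i) fun i _ => hfactor i
    _ ≤ ((∑ i, (1 - ∑ ℓ, (∫ ω, X i ℓ ω ∂P) * (1 - t ℓ))) / Fintype.card ι) ^ Fintype.card ι :=
        prod_le_arith_mean_pow univ fun i _ => (hfactor_nonneg i).trans (hfactor i)
    _ = _ := by
        congr 1
        rw [sum_sub_distrib, sum_comm, sum_const, card_univ, nsmul_one]
        simp_rw [← sum_mul, div_mul_eq_mul_div, ← sum_div]
        field_simp

theorem measureReal_mul_prod_rpow_le [Nonempty ι] (hmeas : ∀ i ℓ, Measurable (X i ℓ))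
    (hindep : iIndepFun (fun i ω ℓ => X i ℓ ω) P) (hnonneg : ∀ i ℓ ω, 0 ≤ X i ℓ ω)
    (hsum : ∀ i ω, ∑ ℓ, X i ℓ ω ≤ 1) {t : κ → ℝ} (ht0 : ∀ ℓ, 0 < t ℓ) (ht1 : ∀ ℓ, t ℓ ≤ 1)
    (b : κ → ℝ) :
    P.real {ω | ∀ ℓ, ∑ i, X i ℓ ω ≤ b ℓ} * ∏ ℓ, t ℓ ^ b ℓ ≤
      (1 - ∑ ℓ, ((∑ i, ∫ ω, X i ℓ ω ∂P) / Fintype.card ι) * (1 - t ℓ)) ^ Fintype.card ι := by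
  set T : Ω → ℝ := fun ω => ∏ i, ∏ ℓ, t ℓ ^ X i ℓ ω
  have hpow0 : ∀ ℓ (x : ℝ), 0 ≤ t ℓ ^ x := fun ℓ x => Real.rpow_nonneg (ht0 ℓ).le x
  have hT0 : ∀ ω, 0 ≤ T ω := fun ω => prod_nonneg fun i _ => prod_nonneg fun ℓ _ => hpow0 ℓ _
  have hTint : Integrable T P :=
    integrable_of_nonneg_of_le_one (by fun_prop) hT0 fun ω =>
      prod_le_one (fun i _ => prod_nonneg fun ℓ _ => hpow0 ℓ _) fun i _ =>
        prod_le_one (fun ℓ _ => hpow0 ℓ _) fun ℓ _ =>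
          Real.rpow_le_one (ht0 ℓ).le (ht1 ℓ) (hnonneg i ℓ ω)
  have hsub : {ω | ∀ ℓ, ∑ i, X i ℓ ω ≤ b ℓ} ⊆ {ω | ∏ ℓ, t ℓ ^ b ℓ ≤ T ω} := by
    intro ω hω
    have hT : T ω = ∏ ℓ, t ℓ ^ ∑ i, X i ℓ ω := by
      simp only [T, Real.rpow_sum_of_pos (ht0 _)]
      exact prod_comm
    rw [Set.mem_ofPred_eq, hT]
    exact prod_le_prod (fun ℓ _ => hpow0 ℓ _) fun ℓ _ =>
      Real.rpow_le_rpow_of_exponent_ge (ht0 ℓ) (ht1 ℓ) (hω ℓ)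
  calc P.real {ω | ∀ ℓ, ∑ i, X i ℓ ω ≤ b ℓ} * ∏ ℓ, t ℓ ^ b ℓ
      ≤ (∏ ℓ, t ℓ ^ b ℓ) * P.real {ω | ∏ ℓ, t ℓ ^ b ℓ ≤ T ω} := by
        rw [mul_comm]
        exact mul_le_mul_of_nonneg_left (measureReal_mono hsub)
          (prod_nonneg fun ℓ _ => hpow0 ℓ _)
    _ ≤ ∫ ω, T ω ∂P := mul_meas_ge_le_integral_of_nonneg (ae_of_all _ hT0) hTint _
    _ ≤ _ := integral_prod_prod_rpow_le hmeas hindep hnonneg hsum fun ℓ => (ht0 ℓ).le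

end Simplex

theorem one_sub_sum_mul_one_sub_div_mul_div {κ : Type*} [Fintype κ] {μ z : κ → ℝ}
    {μ0 z0 : ℝ} (hμ : ∀ ℓ, μ ℓ ≠ 0) (hz0 : z0 ≠ 0) (hμ0 : μ0 = 1 - ∑ ℓ, μ ℓ)
    (hz : z0 + ∑ ℓ, z ℓ = 1) :
    1 - ∑ ℓ, μ ℓ * (1 - μ0 / z0 * (z ℓ / μ ℓ)) = μ0 / z0 := by
  have hterm : ∀ ℓ, μ ℓ * (1 - μ0 / z0 * (z ℓ / μ ℓ)) = μ ℓ - μ0 / z0 * z ℓ := fun ℓ => by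
    field_simp [hμ ℓ]
  rw [sum_congr rfl fun ℓ _ => hterm ℓ, sum_sub_distrib, ← mul_sum]
  linear_combination -hμ0 + μ0 / z0 * hz - div_mul_cancel₀ μ0 hz0

theorem rpow_mul_prod_rpow_mul_prod_rpow {κ : Type*} [Fintype κ] {μ z : κ → ℝ} {θ z0 N : ℝ}
    (hθ : 0 < θ) (hμ : ∀ ℓ, 0 < μ ℓ) (hz : ∀ ℓ, 0 < z ℓ) (hzsum : z0 + ∑ ℓ, z ℓ = 1) :
    θ ^ (N * z0) * (∏ ℓ, (μ ℓ / z ℓ) ^ (N * z ℓ)) * ∏ ℓ, (θ * (z ℓ / μ ℓ)) ^ (N * z ℓ) =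
      θ ^ N := by
  have hterm : ∀ ℓ, (μ ℓ / z ℓ) ^ (N * z ℓ) * (θ * (z ℓ / μ ℓ)) ^ (N * z ℓ) = θ ^ (N * z ℓ) :=
    fun ℓ => by
      rw [← Real.mul_rpow (div_pos (hμ ℓ) (hz ℓ)).le (mul_pos hθ (div_pos (hz ℓ) (hμ ℓ))).le]
      field_simp [(hμ ℓ).ne', (hz ℓ).ne']
  rw [mul_assoc, ← prod_mul_distrib, prod_congr rfl fun ℓ _ => hterm ℓ,
    ← Real.rpow_sum_of_pos hθ, ← Real.rpow_add hθ, ← mul_sum, ← mul_add, hzsum, mul_one]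

/-- Concentration inequality for independent random vectors bounded in the simplex
(lower-tail version): if `z ≤ μ` componentwise, then
`Pr{X̄ₙ ≤ z} ≤ ∏_{ℓ=0}^k (μ_ℓ / z_ℓ)^(n z_ℓ)`. -/
theorem concentration_le
    {Ω : Type*} [MeasureSpace Ω] [IsProbabilityMeasure (ℙ : Measure Ω)]
    (n k : ℕ) (hn : 0 < n)
    (X : Fin n → Fin k → Ω → ℝ)
    (hmeas : ∀ i ℓ, Measurable (X i ℓ))
    (hindep : iIndepFun
      (fun i => fun ω ℓ => X i ℓ ω) ℙ)
    (hnonneg : ∀ i ℓ ω, 0 ≤ X i ℓ ω)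
    (hsum : ∀ i ω, ∑ ℓ, X i ℓ ω ≤ 1)
    (μ : Fin k → ℝ) (hμ : ∀ ℓ, μ ℓ = (∑ i, ∫ ω, X i ℓ ω) / n)
    (μ0 : ℝ) (hμ0 : μ0 = 1 - ∑ ℓ, μ ℓ)
    (z : Fin k → ℝ) (z0 : ℝ)
    (hz0pos : 0 < z0) (hzpos : ∀ ℓ, 0 < z ℓ)
    (hzsum : z0 + ∑ ℓ, z ℓ = 1)
    (hzμ : ∀ ℓ, z ℓ ≤ μ ℓ) :
    ℙ {ω | ∀ ℓ, (∑ i, X i ℓ ω) / n ≤ z ℓ} ≤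
      ENNReal.ofReal ((μ0 / z0) ^ ((n : ℝ) * z0) *
        ∏ ℓ, (μ ℓ / z ℓ) ^ ((n : ℝ) * z ℓ)) := by
  have hnpos : (0 : ℝ) < n := Nat.cast_pos.2 hn
  have : Nonempty (Fin n) := ⟨⟨0, hn⟩⟩
  have hμpos : ∀ ℓ, 0 < μ ℓ := fun ℓ => (hzpos ℓ).trans_le (hzμ ℓ)
  have hμ_card : ∀ ℓ, (∑ i, ∫ ω, X i ℓ ω) / Fintype.card (Fin n) = μ ℓ := fun ℓ => by
    rw [Fintype.card_fin, hμ]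
  simp_rw [div_le_iff₀' hnpos]
  rcases le_or_gt μ0 0 with hμ0_nonpos | hμ0_pos
  · rw [measure_forall_sum_le_eq_zero hmeas hnonneg hsum ?_ (by simp_rw [hμ_card]; linarith)]
    · exact zero_le
    · rw [← mul_sum, Fintype.card_fin]
      nlinarith
  set θ := μ0 / z0
  have hθ0 : 0 < θ := div_pos hμ0_pos hz0pos
  have hθ1 : θ ≤ 1 :=
    (div_le_one hz0pos).2 (by linarith [sum_le_sum fun ℓ (_ : ℓ ∈ univ) => hzμ ℓ])
  set t : Fin k → ℝ := fun ℓ => θ * (z ℓ / μ ℓ)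
  have ht0 : ∀ ℓ, 0 < t ℓ := fun ℓ => mul_pos hθ0 (div_pos (hzpos ℓ) (hμpos ℓ))
  have ht1 : ∀ ℓ, t ℓ ≤ 1 := fun ℓ =>
    mul_le_one₀ hθ1 (div_pos (hzpos ℓ) (hμpos ℓ)).le ((div_le_one (hμpos ℓ)).2 (hzμ ℓ))
  have hchernoff := measureReal_mul_prod_rpow_le hmeas hindep hnonneg hsum ht0 ht1
    (fun ℓ => n * z ℓ)
  have hθ : 1 - ∑ ℓ, μ ℓ * (1 - t ℓ) = θ :=
    one_sub_sum_mul_one_sub_div_mul_div (fun ℓ => (hμpos ℓ).ne') hz0pos.ne' hμ0 hzsum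
  simp_rw [hμ_card, hθ, Fintype.card_fin, ← Real.rpow_natCast] at hchernoff
  rw [ENNReal.le_ofReal_iff_toReal_le (measure_ne_top _ _) (mul_nonneg (Real.rpow_nonneg hθ0.le _)
    (prod_nonneg fun ℓ _ => Real.rpow_nonneg (div_pos (hμpos ℓ) (hzpos ℓ)).le _))]
  exact le_of_mul_le_mul_right
    (hchernoff.trans_eq (rpow_mul_prod_rpow_mul_prod_rpow hθ0 hμpos hzpos hzsum).symm)
    (prod_pos fun ℓ _ => Real.rpow_pos_of_pos (ht0 ℓ) _)
end

section
/- Let X_1, ..., X_n be independent random vectors of dimension k, where X_i = (X_{1,i}, ..., X_{k,i}), such that for every i, X_{ℓ,i} ≥ 0 for all ℓ = 1, ..., k and Σ_{ℓ=1}^k X_{ℓ,i} ≤ 1. Let X̄_n = (1/n) Σ_{i=1}^n X_i, let μ_ℓ = (1/n) Σ_{i=1}^n E[X_{ℓ,i}] for ℓ = 1, ..., k, and set μ_0 = 1 − Σ_{ℓ=1}^k μ_ℓ. Let z_0, z_1, ..., z_k be positive real numbers with Σ_{ℓ=0}^k z_ℓ = 1, and suppose z_ℓ ≥ μ_ℓ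 for all ℓ = 1, ..., k. Then Pr{X̄_n ≥ z componentwise} ≤ ∏_{ℓ=0}^k (μ_ℓ / z_ℓ)^{n z_ℓ}, where z = (z_1, ..., z_k). -/
/-!
Chernoff's method with a separate tilt in each coordinate. For `t ≥ 0` the event forces
`∑ᵢ ⟪t, Xᵢ⟫ ≥ n ⟪t, z⟫`. Since `exp` is convex and `Xᵢ` lies in the sub-simplex
`{x ≥ 0, ∑ x ≤ 1}`, whose vertices are `0` and the unit vectors,
`E exp ⟪t, Xᵢ⟫ ≤ 1 - ∑ₗ E Xₗᵢ + ∑ₗ E Xₗᵢ exp tₗ`; independence and AM-GM turn the product of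
these bounds into `(μ₀ + ∑ₗ μₗ exp tₗ)ⁿ`. The tilt `exp tₗ = (μ₀ / z₀) (zₗ / μₗ)`, which is
`≥ 1` because `μ ≤ z`, makes this exactly the claimed product. If some `μₗ = 0`, the
coordinate `ℓ` vanishes almost surely and the event is null.
-/

open MeasureTheory ProbabilityTheory Finset Real

theorem Real.exp_sum_mul_le_of_sum_le_one {ι : Type*} [Fintype ι] (x t : ι → ℝ)
    (hx : ∀ i, 0 ≤ x i) (hs : ∑ i, x i ≤ 1) :
    exp (∑ i, t i * x i) ≤ (1 - ∑ i, x i) + ∑ i, x i * exp (t i) := by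
  -- Jensen on `Option ι`: the extra index `none` carries the weight `1 - ∑ x` at the point `0`.
  have h := convexOn_exp.map_sum_le (t := (univ : Finset (Option ι)))
    (w := fun o => o.elim (1 - ∑ i, x i) x) (p := fun o => o.elim 0 t)
    (fun o _ => o.rec (by simpa using hs) hx) (by simp [Fintype.sum_option])
    (fun _ _ => Set.mem_univ _)
  simpa [Fintype.sum_option, mul_comm] using h

theorem le_one_of_nonneg_of_sum_le_one {ι : Type*} [Fintype ι] {x : ι → ℝ}
    (hx : ∀ i, 0 ≤ x i) (hs : ∑ i, x i ≤ 1) (i : ι) : x i ≤ 1 :=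
  (single_le_sum (fun j _ => hx j) (mem_univ i)).trans hs

theorem Finset.prod_le_mean_pow {ι : Type*} (s : Finset ι) (f : ι → ℝ)
    (hf : ∀ i ∈ s, 0 ≤ f i) : ∏ i ∈ s, f i ≤ ((∑ i ∈ s, f i) / #s) ^ #s := by
  rcases s.eq_empty_or_nonempty with rfl | hs
  · simp
  have hprod : 0 ≤ ∏ i ∈ s, f i := prod_nonneg hf
  have hgm := Real.geom_mean_le_arith_mean s 1 f (fun _ _ => zero_le_one)
    (by simpa using hs.card_pos) hf
  simp only [Pi.one_apply, rpow_one, one_mul, sum_const, nsmul_eq_mul, mul_one] at hgm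
  calc ∏ i ∈ s, f i = ((∏ i ∈ s, f i) ^ (#s : ℝ)⁻¹) ^ #s :=
        (rpow_inv_natCast_pow hprod hs.card_pos.ne').symm
    _ ≤ ((∑ i ∈ s, f i) / #s) ^ #s := pow_le_pow_left₀ (rpow_nonneg hprod _) hgm _

theorem exp_neg_mul_sum_log_sub_mul_rpow {ι : Type*} [Fintype ι] {a₀ z₀ : ℝ} {a z : ι → ℝ}
    (r : ℝ) (ha₀ : 0 < a₀) (ha : ∀ ℓ, 0 < a ℓ) (hz : z₀ + ∑ ℓ, z ℓ = 1) :
    exp (-(r * ∑ ℓ, (log a₀ - log (a ℓ)) * z ℓ)) * a₀ ^ r =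
      a₀ ^ (r * z₀) * ∏ ℓ, a ℓ ^ (r * z ℓ) := by
  simp only [rpow_def_of_pos ha₀, rpow_def_of_pos (ha _), ← exp_sum, ← exp_add]
  congr 1
  simp only [sub_mul, sum_sub_distrib]
  rw [← mul_sum, show ∑ ℓ, z ℓ = 1 - z₀ by linarith]
  simp only [mul_left_comm _ r, ← mul_sum]
  ring

theorem add_sum_mul_exp_log_div_sub_log_div {ι : Type*} [Fintype ι] {m₀ z₀ : ℝ} {m z : ι → ℝ}
    (hm₀ : 0 < m₀) (hz₀ : 0 < z₀) (hm : ∀ ℓ, 0 < m ℓ) (hz : ∀ ℓ, 0 < z ℓ)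
    (hsum : z₀ + ∑ ℓ, z ℓ = 1) :
    m₀ + ∑ ℓ, m ℓ * exp (log (m₀ / z₀) - log (m ℓ / z ℓ)) = m₀ / z₀ := by
  have hterm : ∀ ℓ, m ℓ * exp (log (m₀ / z₀) - log (m ℓ / z ℓ)) = m₀ / z₀ * z ℓ := fun ℓ => by
    rw [exp_sub, exp_log (div_pos hm₀ hz₀), exp_log (div_pos (hm ℓ) (hz ℓ))]
    field_simp [(hm ℓ).ne', (hz ℓ).ne']
  rw [sum_congr rfl fun ℓ _ => hterm ℓ, ← mul_sum, show ∑ ℓ, z ℓ = 1 - z₀ by linarith]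
  field_simp
  ring

section

variable {Ω ι : Type*} [MeasurableSpace Ω] {P : Measure Ω}

theorem measure_le_eq_zero_of_integral_eq_zero {f : Ω → ℝ} (hf : 0 ≤ f) (hint : Integrable f P)
    (h0 : P[f] = 0) {c : ℝ} (hc : 0 < c) : P {ω | c ≤ f ω} = 0 := by
  have hae : f =ᵐ[P] 0 := (integral_eq_zero_iff_of_nonneg hf hint).mp h0
  exact measure_eq_zero_iff_ae_notMem.mpr <| hae.mono fun ω hω hle => hc.not_ge (hle.trans_eq hω)

theorem measure_forall_le_mean_eq_zero {n : ℕ} (X : Fin n → ι → Ω → ℝ) {z : ι → ℝ} {ℓ : ι}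
    (hint : ∀ i, Integrable (X i ℓ) P) (hnonneg : ∀ i ω, 0 ≤ X i ℓ ω) (hz : 0 < z ℓ)
    (hmean : (∑ i, P[X i ℓ]) / (n : ℝ) = 0) :
    P {ω | ∀ ℓ, z ℓ ≤ (∑ i, X i ℓ ω) / n} = 0 := by
  have hnull : P {ω | z ℓ ≤ (∑ i, X i ℓ ω) / n} = 0 := by
    refine measure_le_eq_zero_of_integral_eq_zero
      (fun ω => div_nonneg (sum_nonneg fun i _ => hnonneg i ω) n.cast_nonneg)
      ((integrable_finsetSum _ fun i _ => hint i).div_const _) ?_ hz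
    rwa [integral_div, integral_finsetSum _ fun i _ => hint i]
  exact measure_mono_null (fun ω hω => hω ℓ) hnull

variable [Fintype ι] {V : ι → Ω → ℝ}

theorem integrable_of_nonneg_of_sum_le_one [IsFiniteMeasure P] (hmeas : ∀ ℓ, Measurable (V ℓ))
    (hnonneg : ∀ ℓ ω, 0 ≤ V ℓ ω) (hsum : ∀ ω, ∑ ℓ, V ℓ ω ≤ 1) (ℓ : ι) : Integrable (V ℓ) P :=
  .of_bound (hmeas ℓ).aestronglyMeasurable 1 <| ae_of_all _ fun ω => by
    rw [norm_of_nonneg (hnonneg ℓ ω)]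
    exact le_one_of_nonneg_of_sum_le_one (hnonneg · ω) (hsum ω) ℓ

theorem integrable_exp_sum_mul_of_nonneg_of_sum_le_one [IsFiniteMeasure P]
    (hmeas : ∀ ℓ, Measurable (V ℓ)) (hnonneg : ∀ ℓ ω, 0 ≤ V ℓ ω) (hsum : ∀ ω, ∑ ℓ, V ℓ ω ≤ 1)
    (t : ι → ℝ) : Integrable (fun ω => exp (∑ ℓ, t ℓ * V ℓ ω)) P := by
  refine .of_bound (by fun_prop) (exp (∑ ℓ, |t ℓ|)) (ae_of_all _ fun ω => ?_)
  rw [norm_of_nonneg (exp_pos _).le, exp_le_exp]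
  refine sum_le_sum fun ℓ _ => ?_
  calc t ℓ * V ℓ ω ≤ |t ℓ| * V ℓ ω := mul_le_mul_of_nonneg_right (le_abs_self _) (hnonneg ℓ ω)
    _ ≤ |t ℓ| := mul_le_of_le_one_right (abs_nonneg _)
        (le_one_of_nonneg_of_sum_le_one (hnonneg · ω) (hsum ω) ℓ)

theorem mgf_sum_mul_le_of_nonneg_of_sum_le_one [IsProbabilityMeasure P]
    (hmeas : ∀ ℓ, Measurable (V ℓ)) (hnonneg : ∀ ℓ ω, 0 ≤ V ℓ ω) (hsum : ∀ ω, ∑ ℓ, V ℓ ω ≤ 1)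
    (t : ι → ℝ) :
    mgf (fun ω => ∑ ℓ, t ℓ * V ℓ ω) P 1 ≤
      1 - ∑ ℓ, P[V ℓ] + ∑ ℓ, P[V ℓ] * exp (t ℓ) := by
  have hint := integrable_of_nonneg_of_sum_le_one (P := P) hmeas hnonneg hsum
  calc mgf (fun ω => ∑ ℓ, t ℓ * V ℓ ω) P 1
      ≤ ∫ ω, (1 - ∑ ℓ, V ℓ ω) + ∑ ℓ, V ℓ ω * exp (t ℓ) ∂P := by
        refine integral_mono_of_nonneg (ae_of_all _ fun ω => (exp_pos _).le) ?_
          (ae_of_all _ fun ω => ?_)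
        · exact ((integrable_const 1).sub (integrable_finsetSum _ fun ℓ _ => hint ℓ)).add
            (integrable_finsetSum _ fun ℓ _ => (hint ℓ).mul_const _)
        · simpa only [one_mul] using
            exp_sum_mul_le_of_sum_le_one (V · ω) t (hnonneg · ω) (hsum ω)
    _ = 1 - ∑ ℓ, P[V ℓ] + ∑ ℓ, P[V ℓ] * exp (t ℓ) := by
        rw [integral_add, integral_sub, integral_finsetSum, integral_finsetSum]
        · simp [integral_mul_const]
        all_goals fun_prop

theorem mgf_sum_sum_mul_le_pow [IsProbabilityMeasure P] {n : ℕ} (hn : 0 < n)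
    (X : Fin n → ι → Ω → ℝ) (hmeas : ∀ i ℓ, Measurable (X i ℓ))
    (hindep : iIndepFun (fun i ω ℓ => X i ℓ ω) P) (hnonneg : ∀ i ℓ ω, 0 ≤ X i ℓ ω)
    (hsum : ∀ i ω, ∑ ℓ, X i ℓ ω ≤ 1) (m : ι → ℝ) (hm : ∀ ℓ, m ℓ = (∑ i, P[X i ℓ]) / n)
    (t : ι → ℝ) :
    mgf (∑ i, fun ω => ∑ ℓ, t ℓ * X i ℓ ω) P 1 ≤
      (1 - ∑ ℓ, m ℓ + ∑ ℓ, m ℓ * exp (t ℓ)) ^ n := by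
  set a : Fin n → ℝ := fun i => 1 - ∑ ℓ, P[X i ℓ] + ∑ ℓ, P[X i ℓ] * exp (t ℓ)
  have hmgf : ∀ i, mgf (fun ω => ∑ ℓ, t ℓ * X i ℓ ω) P 1 ≤ a i := fun i =>
    mgf_sum_mul_le_of_nonneg_of_sum_le_one (hmeas i) (hnonneg i) (hsum i) t
  have hmean : (∑ i, a i) / n = 1 - ∑ ℓ, m ℓ + ∑ ℓ, m ℓ * exp (t ℓ) := by
    simp only [a, hm, sum_add_distrib, sum_sub_distrib, sum_const, card_univ, Fintype.card_fin,
      nsmul_eq_mul, mul_one, div_mul_eq_mul_div, ← sum_div]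
    rw [sum_comm, sum_comm (s := univ) (γ := Fin n)]
    simp only [← sum_mul]
    field_simp
  calc mgf (∑ i, fun ω => ∑ ℓ, t ℓ * X i ℓ ω) P 1
      = ∏ i, mgf (fun ω => ∑ ℓ, t ℓ * X i ℓ ω) P 1 :=
        (hindep.comp (fun _ v => ∑ ℓ, t ℓ * v ℓ) fun _ => by fun_prop).mgf_sum
          (fun i => by fun_prop) univ
    _ ≤ ∏ i, a i := prod_le_prod (fun _ _ => mgf_nonneg) fun i _ => hmgf i
    _ ≤ (1 - ∑ ℓ, m ℓ + ∑ ℓ, m ℓ * exp (t ℓ)) ^ n := by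
        simpa [hmean] using prod_le_mean_pow univ a fun i _ => mgf_nonneg.trans (hmgf i)

theorem measureReal_forall_le_mean_le_exp_mul_pow [IsProbabilityMeasure P] {n : ℕ} (hn : 0 < n)
    (X : Fin n → ι → Ω → ℝ) (hmeas : ∀ i ℓ, Measurable (X i ℓ))
    (hindep : iIndepFun (fun i ω ℓ => X i ℓ ω) P) (hnonneg : ∀ i ℓ ω, 0 ≤ X i ℓ ω)
    (hsum : ∀ i ω, ∑ ℓ, X i ℓ ω ≤ 1) (m : ι → ℝ) (hm : ∀ ℓ, m ℓ = (∑ i, P[X i ℓ]) / n)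
    (z t : ι → ℝ) (ht : ∀ ℓ, 0 ≤ t ℓ) :
    P.real {ω | ∀ ℓ, z ℓ ≤ (∑ i, X i ℓ ω) / n} ≤
      exp (-(n * ∑ ℓ, t ℓ * z ℓ)) * (1 - ∑ ℓ, m ℓ + ∑ ℓ, m ℓ * exp (t ℓ)) ^ n := by
  set S : Ω → ℝ := ∑ i, fun ω => ∑ ℓ, t ℓ * X i ℓ ω
  have hevent : {ω | ∀ ℓ, z ℓ ≤ (∑ i, X i ℓ ω) / n} ⊆ {ω | n * ∑ ℓ, t ℓ * z ℓ ≤ S ω} := by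
    intro ω hω
    simp only [Set.mem_ofPred_eq, S, Finset.sum_apply, mul_sum]
    rw [sum_comm]
    refine sum_le_sum fun ℓ _ => ?_
    rw [← mul_sum, mul_left_comm]
    exact mul_le_mul_of_nonneg_left ((le_div_iff₀' (Nat.cast_pos.mpr hn)).mp (hω ℓ)) (ht ℓ)
  have hint : Integrable (fun ω => exp (1 * S ω)) P := by
    refine (iIndepFun.integrable_exp_mul_sum ?_ (fun i => by fun_prop) fun i _ => ?_)
    · exact hindep.comp (fun _ v => ∑ ℓ, t ℓ * v ℓ) fun _ => by fun_prop
    · simpa only [one_mul] using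
        integrable_exp_sum_mul_of_nonneg_of_sum_le_one (hmeas i) (hnonneg i) (hsum i) t
  calc P.real {ω | ∀ ℓ, z ℓ ≤ (∑ i, X i ℓ ω) / n}
      ≤ P.real {ω | n * ∑ ℓ, t ℓ * z ℓ ≤ S ω} := measureReal_mono hevent
    _ ≤ exp (-1 * (n * ∑ ℓ, t ℓ * z ℓ)) * mgf S P 1 := measure_ge_le_exp_mul_mgf _ zero_le_one hint
    _ ≤ exp (-(n * ∑ ℓ, t ℓ * z ℓ)) * (1 - ∑ ℓ, m ℓ + ∑ ℓ, m ℓ * exp (t ℓ)) ^ n := by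
        rw [neg_one_mul]
        gcongr
        exact mgf_sum_sum_mul_le_pow hn X hmeas hindep hnonneg hsum m hm t

end

/-- Concentration inequality for independent random vectors bounded in the simplex
(upper-tail version): if `μ ≤ z` componentwise, then
`Pr{X̄ₙ ≥ z} ≤ ∏_{ℓ=0}^k (μ_ℓ / z_ℓ)^(n z_ℓ)`. -/
theorem concentration_ge
    {Ω : Type*} [MeasureSpace Ω] [IsProbabilityMeasure (ℙ : Measure Ω)]
    (n k : ℕ) (hn : 0 < n)
    (X : Fin n → Fin k → Ω → ℝ)
    (hmeas : ∀ i ℓ, Measurable (X i ℓ))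
    (hindep : iIndepFun
      (fun i => fun ω ℓ => X i ℓ ω) ℙ)
    (hnonneg : ∀ i ℓ ω, 0 ≤ X i ℓ ω)
    (hsum : ∀ i ω, ∑ ℓ, X i ℓ ω ≤ 1)
    (μ : Fin k → ℝ) (hμ : ∀ ℓ, μ ℓ = (∑ i, ∫ ω, X i ℓ ω) / n)
    (μ0 : ℝ) (hμ0 : μ0 = 1 - ∑ ℓ, μ ℓ)
    (z : Fin k → ℝ) (z0 : ℝ)
    (hz0pos : 0 < z0) (hzpos : ∀ ℓ, 0 < z ℓ)
    (hzsum : z0 + ∑ ℓ, z ℓ = 1)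
    (hzμ : ∀ ℓ, μ ℓ ≤ z ℓ) :
    ℙ {ω | ∀ ℓ, z ℓ ≤ (∑ i, X i ℓ ω) / n} ≤
      ENNReal.ofReal ((μ0 / z0) ^ ((n : ℝ) * z0) *
        ∏ ℓ, (μ ℓ / z ℓ) ^ ((n : ℝ) * z ℓ)) := by
  have hXint : ∀ i ℓ, Integrable (X i ℓ) := fun i =>
    integrable_of_nonneg_of_sum_le_one (hmeas i) (hnonneg i) (hsum i)
  have hμnonneg : ∀ ℓ, 0 ≤ μ ℓ := fun ℓ => by
    rw [hμ ℓ]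
    exact div_nonneg (sum_nonneg fun i _ => integral_nonneg (hnonneg i ℓ)) n.cast_nonneg
  by_cases hdeg : ∃ ℓ, μ ℓ = 0
  · obtain ⟨ℓ, hℓ⟩ := hdeg
    rw [measure_forall_le_mean_eq_zero X (hXint · ℓ) (hnonneg · ℓ) (hzpos ℓ) (hμ ℓ ▸ hℓ)]
    exact zero_le
  push Not at hdeg
  have hμpos : ∀ ℓ, 0 < μ ℓ := fun ℓ => (hμnonneg ℓ).lt_of_ne' (hdeg ℓ)
  have hz0μ0 : z0 ≤ μ0 := by
    rw [hμ0]
    linarith [sum_le_sum fun ℓ (_ : ℓ ∈ univ) => hzμ ℓ]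
  have hμ0pos : 0 < μ0 := hz0pos.trans_le hz0μ0
  have ht : ∀ ℓ, 0 ≤ log (μ0 / z0) - log (μ ℓ / z ℓ) := fun ℓ =>
    sub_nonneg.mpr <| (log_nonpos (div_nonneg (hμnonneg ℓ) (hzpos ℓ).le)
      ((div_le_one (hzpos ℓ)).mpr (hzμ ℓ))).trans (log_nonneg ((one_le_div hz0pos).mpr hz0μ0))
  have hbound :=
    measureReal_forall_le_mean_le_exp_mul_pow hn X hmeas hindep hnonneg hsum μ hμ z _ ht
  rw [← hμ0, add_sum_mul_exp_log_div_sub_log_div hμ0pos hz0pos hμpos hzpos hzsum, ← rpow_natCast,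
    exp_neg_mul_sum_log_sub_mul_rpow (a := fun ℓ => μ ℓ / z ℓ) _ (div_pos hμ0pos hz0pos)
      (fun ℓ => div_pos (hμpos ℓ) (hzpos ℓ)) hzsum] at hbound
  exact (ENNReal.le_ofReal_iff_toReal_le (measure_ne_top _ _)
    (measureReal_nonneg.trans hbound)).mpr hbound
end

section
/- Let α_0, α_1, ..., α_k be positive reals and let μ_i = α_i / Σ_{ℓ=0}^k α_ℓ for i = 0, 1, ..., k. Let X_1, ..., X_n be independent identically distributed random vectors of dimension k, each taking values in the probability simplex {x ∈ R^k : x_ℓ ≥ 0, Σ_{ℓ=1}^k x_ℓ ≤ 1} and satisfying E[X_{ℓ,i}] = μ_ℓ for ℓ = 1, ..., k (as holds when (X_{0,i}, X_{1,i}, ..., X_{k,i}) is Dirichlet distributed with parameter (α_0, ..., α_k)). Let X̄_n = (1/n) Σ_{i=1}^n X_i. Let z_0, z_1, ..., z_k be positive reals with Σ_{ℓ=0}^k z_ℓ = 1, and suppose z_ℓ ≤ μ_ℓ for all ℓ = 1, ..., k. Then Pr{X̄_n ≤ z componentwise} ≤ [∏_{i=0}^k (μ_i / z_i)^{z_i}]^n,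 where z = (z_1, ..., z_k). -/
/-!
Chernoff's method with an exponential tilt. Put `r i = μ i / z i` and `c ℓ = r 0 / r (ℓ + 1)`;
since `z ≤ μ` on the last `k` coordinates (hence `μ 0 ≤ z 0`), every `c ℓ ≤ 1`. For `x` in the
simplex, weighted AM-GM with the slack weight `1 - ∑ x` placed on `1` gives
`∏ c ^ x ≤ 1 + ∑ (c - 1) x`, so `E ∏ c_ℓ ^ X_ℓ ≤ 1 + ∑ (c_ℓ - 1) μ_ℓ = r 0`. As `c ≤ 1`, the event
`X̄ ≤ z` forces `∏_i ∏_ℓ c_ℓ ^ X_{i,ℓ} ≥ ∏_ℓ c_ℓ ^ (n z_ℓ)`, and Markov's inequality together with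
independence bounds its probability by `(r 0 / ∏_ℓ c_ℓ ^ z_ℓ) ^ n = (∏_i r_i ^ z_i) ^ n`.
-/

open MeasureTheory ProbabilityTheory Finset Real

theorem Real.prod_rpow_le_one_add_sum_sub_one_mul {ι : Type*} [Fintype ι] {c w : ι → ℝ}
    (hc : ∀ i, 0 ≤ c i) (hw : ∀ i, 0 ≤ w i) (hw₁ : ∑ i, w i ≤ 1) :
    ∏ i, c i ^ w i ≤ 1 + ∑ i, (c i - 1) * w i := by
  have hamgm := geom_mean_le_arith_mean_weighted univ (fun o : Option ι => o.elim (1 - ∑ i, w i) w)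
    (fun o => o.elim 1 c) (fun o _ => o.rec (sub_nonneg.2 hw₁) hw)
    (by simp [Fintype.sum_option]) (fun o _ => o.rec zero_le_one hc)
  simp only [Fintype.prod_option, Fintype.sum_option, Option.elim, one_rpow, one_mul,
    mul_one] at hamgm
  refine hamgm.trans_eq ?_
  simp only [sub_one_mul, sum_sub_distrib, mul_comm (w _)]
  ring

theorem Real.exp_sum_log_mul_le_one_add_sum_sub_one_mul {ι : Type*} [Fintype ι] {c x : ι → ℝ}
    (hc : ∀ i, 0 < c i) (hx : ∀ i, 0 ≤ x i) (hx₁ : ∑ i, x i ≤ 1) :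
    exp (∑ i, log (c i) * x i) ≤ 1 + ∑ i, (c i - 1) * x i := by
  simpa only [exp_sum, rpow_def_of_pos (hc _)] using
    prod_rpow_le_one_add_sum_sub_one_mul (fun i => (hc i).le) hx hx₁

section SimplexValued

variable {Ω ι : Type*} [MeasurableSpace Ω] {P : Measure Ω} [IsProbabilityMeasure P] [Fintype ι]
  {X : Ω → ι → ℝ} {c : ι → ℝ}

theorem integrable_apply_of_sum_le_one (hX : Measurable X) (h0 : ∀ i ω, 0 ≤ X ω i)
    (h1 : ∀ ω, ∑ i, X ω i ≤ 1) (i : ι) : Integrable (fun ω => X ω i) P :=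
  .of_bound (by fun_prop) 1 <| ae_of_all _ fun ω => by
    rw [norm_of_nonneg (h0 i ω)]
    exact (single_le_sum (fun j _ => h0 j ω) (mem_univ i)).trans (h1 ω)

theorem integrable_exp_sum_log_mul (hX : Measurable X) (h0 : ∀ i ω, 0 ≤ X ω i)
    (h1 : ∀ ω, ∑ i, X ω i ≤ 1) (hc : ∀ i, 0 < c i) :
    Integrable (fun ω => exp (∑ i, log (c i) * X ω i)) P := by
  have := integrable_apply_of_sum_le_one (P := P) hX h0 h1
  refine Integrable.mono' (g := fun ω => 1 + ∑ i, (c i - 1) * X ω i) (by fun_prop) (by fun_prop)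
    (ae_of_all _ fun ω => ?_)
  rw [norm_of_nonneg (exp_pos _).le]
  exact exp_sum_log_mul_le_one_add_sum_sub_one_mul hc (h0 · ω) (h1 ω)

theorem mgf_sum_log_mul_le (hX : Measurable X) (h0 : ∀ i ω, 0 ≤ X ω i)
    (h1 : ∀ ω, ∑ i, X ω i ≤ 1) (hc : ∀ i, 0 < c i) :
    mgf (fun ω => ∑ i, log (c i) * X ω i) P 1 ≤ 1 + ∑ i, (c i - 1) * P[fun ω => X ω i] := by
  have hX_int := integrable_apply_of_sum_le_one (P := P) hX h0 h1
  calc mgf (fun ω => ∑ i, log (c i) * X ω i) P 1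
      = ∫ ω, exp (∑ i, log (c i) * X ω i) ∂P := by simp only [mgf, one_mul]
    _ ≤ ∫ ω, 1 + ∑ i, (c i - 1) * X ω i ∂P :=
        integral_mono (integrable_exp_sum_log_mul hX h0 h1 hc) (by fun_prop)
          fun ω => exp_sum_log_mul_le_one_add_sum_sub_one_mul hc (h0 · ω) (h1 ω)
    _ = 1 + ∑ i, (c i - 1) * P[fun ω => X ω i] := by
        rw [integral_add (integrable_const 1) (by fun_prop),
          integral_finsetSum _ fun i _ => (hX_int i).const_mul _]
        simp [integral_const_mul]

end SimplexValued

theorem ProbabilityTheory.iIndepFun.measureReal_sum_ge_le_exp_mul_pow {Ω ι : Type*}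
    [MeasurableSpace Ω] {P : Measure Ω} [IsProbabilityMeasure P] [Fintype ι] {Y : ι → Ω → ℝ}
    (hindep : iIndepFun Y P) (hY : ∀ i, Measurable (Y i)) {t M : ℝ} (ht : 0 ≤ t)
    (hint : ∀ i, Integrable (fun ω => exp (t * Y i ω)) P) (hM : ∀ i, mgf (Y i) P t ≤ M)
    (ε : ℝ) :
    P.real {ω | ε ≤ ∑ i, Y i ω} ≤ exp (-t * ε) * M ^ Fintype.card ι := by
  have hsum := measure_ge_le_exp_mul_mgf (X := ∑ i, Y i) ε ht
    (hindep.integrable_exp_mul_sum hY fun i _ => hint i)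
  rw [hindep.mgf_sum hY] at hsum
  simp only [Finset.sum_apply] at hsum
  refine hsum.trans (mul_le_mul_of_nonneg_left ?_ (exp_pos _).le)
  rw [← card_univ, ← prod_const]
  exact prod_le_prod (fun i _ => mgf_nonneg) fun i _ => hM i

theorem card_mul_sum_mul_le_sum_sum_mul {ι κ : Type*} [Fintype ι] [Fintype κ]
    {x : ι → κ → ℝ} {a z : κ → ℝ} (ha : ∀ j, a j ≤ 0)
    (hx : ∀ j, (∑ i, x i j) / Fintype.card ι ≤ z j) :
    Fintype.card ι * ∑ j, a j * z j ≤ ∑ i, ∑ j, a j * x i j := by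
  rw [sum_comm, mul_sum]
  refine sum_le_sum fun j _ => ?_
  rcases isEmpty_or_nonempty ι with hι | hι
  · simp
  have := (div_le_iff₀ (by positivity)).1 (hx j)
  rw [← mul_sum]
  nlinarith [ha j]

noncomputable def lowerTiltWeight {k : ℕ} (μ z : Fin (k + 1) → ℝ) (ℓ : Fin k) : ℝ :=
  μ 0 / z 0 / (μ ℓ.succ / z ℓ.succ)

section LowerTiltWeight

variable {k : ℕ} {μ z : Fin (k + 1) → ℝ}

theorem lowerTiltWeight_pos (hμ : ∀ i, 0 < μ i) (hz : ∀ i, 0 < z i) (ℓ : Fin k) :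
    0 < lowerTiltWeight μ z ℓ :=
  div_pos (div_pos (hμ 0) (hz 0)) (div_pos (hμ _) (hz _))

theorem lowerTiltWeight_le_one (hμ : ∀ i, 0 < μ i) (hz : ∀ i, 0 < z i) (hμ₁ : ∑ i, μ i = 1)
    (hz₁ : ∑ i, z i = 1) (hzμ : ∀ ℓ : Fin k, z ℓ.succ ≤ μ ℓ.succ) (ℓ : Fin k) :
    lowerTiltWeight μ z ℓ ≤ 1 := by
  have hμz₀ : μ 0 ≤ z 0 := by
    rw [Fin.sum_univ_succ] at hμ₁ hz₁
    linarith [sum_le_sum fun ℓ (_ : ℓ ∈ univ) => hzμ ℓ]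
  rw [lowerTiltWeight, div_le_one (div_pos (hμ _) (hz _)),
    div_le_div_iff₀ (hz 0) (hz _)]
  exact mul_le_mul hμz₀ (hzμ ℓ) (hz _).le (hz 0).le |>.trans_eq (mul_comm _ _)

theorem one_add_sum_lowerTiltWeight_sub_one_mul (hμ : ∀ i, 0 < μ i) (hz : ∀ i, 0 < z i)
    (hμ₁ : ∑ i, μ i = 1) (hz₁ : ∑ i, z i = 1) :
    1 + ∑ ℓ, (lowerTiltWeight μ z ℓ - 1) * μ ℓ.succ = μ 0 / z 0 := by
  have hterm : ∀ ℓ : Fin k, (lowerTiltWeight μ z ℓ - 1) * μ ℓ.succ =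
      μ 0 / z 0 * z ℓ.succ - μ ℓ.succ := fun ℓ => by
    have := (hμ ℓ.succ).ne'; have := (hz ℓ.succ).ne'
    unfold lowerTiltWeight; field_simp
  rw [Fin.sum_univ_succ] at hμ₁ hz₁
  rw [sum_congr rfl fun ℓ _ => hterm ℓ, sum_sub_distrib, ← mul_sum]
  have := (hz 0).ne'
  field_simp
  linear_combination μ 0 * hz₁ - z 0 * hμ₁

theorem exp_neg_sum_log_lowerTiltWeight_mul (hμ : ∀ i, 0 < μ i) (hz : ∀ i, 0 < z i)
    (hz₁ : ∑ i, z i = 1) :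
    exp (-∑ ℓ, log (lowerTiltWeight μ z ℓ) * z ℓ.succ) * (μ 0 / z 0) =
      ∏ i, (μ i / z i) ^ z i := by
  have hr : ∀ i, 0 < μ i / z i := fun i => div_pos (hμ i) (hz i)
  rw [← exp_log (hr 0), ← exp_add]
  rw [Fin.sum_univ_succ] at hz₁
  simp only [rpow_def_of_pos (hr _), ← exp_sum, Fin.sum_univ_succ, lowerTiltWeight,
    log_div (hr _).ne' (hr _).ne', sub_mul, sum_sub_distrib, ← mul_sum]
  congr 1
  linear_combination -log (μ 0 / z 0) * hz₁

end LowerTiltWeight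

theorem dirichlet_concentration_le_general
    {Ω : Type*} [MeasureSpace Ω] [IsProbabilityMeasure (ℙ : Measure Ω)]
    (n k : ℕ)
    (α : Fin (k + 1) → ℝ) (hα : ∀ i, 0 < α i)
    (μ : Fin (k + 1) → ℝ) (hμ : ∀ i, μ i = α i / ∑ l, α l)
    (X : Fin n → Ω → Fin k → ℝ)
    (hmeas : ∀ i, Measurable (X i))
    (hindep : iIndepFun X ℙ)
    (hnonneg : ∀ i ℓ ω, 0 ≤ X i ω ℓ)
    (hsimplex : ∀ i ω, ∑ ℓ, X i ω ℓ ≤ 1)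
    (hmean : ∀ (i : Fin n) (ℓ : Fin k), ∫ ω, X i ω ℓ = μ ℓ.succ)
    (z : Fin (k + 1) → ℝ) (hzpos : ∀ i, 0 < z i) (hzsum : ∑ i, z i = 1)
    (hzμ : ∀ ℓ : Fin k, z ℓ.succ ≤ μ ℓ.succ) :
    ℙ {ω | ∀ ℓ : Fin k, (∑ i, X i ω ℓ) / n ≤ z ℓ.succ} ≤
      ENNReal.ofReal ((∏ i, (μ i / z i) ^ (z i)) ^ n) := by
  have hα_sum : 0 < ∑ l, α l := sum_pos (fun i _ => hα i) univ_nonempty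
  have hμpos : ∀ i, 0 < μ i := fun i => hμ i ▸ div_pos (hα i) hα_sum
  have hμsum : ∑ i, μ i = 1 := by simp_rw [hμ, ← sum_div, div_self hα_sum.ne']
  set c := lowerTiltWeight μ z
  have hc : ∀ ℓ, 0 < c ℓ := lowerTiltWeight_pos hμpos hzpos
  have hlog_c : ∀ ℓ, log (c ℓ) ≤ 0 := fun ℓ =>
    log_nonpos (hc ℓ).le (lowerTiltWeight_le_one hμpos hzpos hμsum hzsum hzμ ℓ)
  have hY_indep : iIndepFun (fun i ω => ∑ ℓ, log (c ℓ) * X i ω ℓ) ℙ :=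
    hindep.comp (fun _ v => ∑ ℓ, log (c ℓ) * v ℓ) fun _ => by fun_prop
  have hchernoff := hY_indep.measureReal_sum_ge_le_exp_mul_pow (fun i => by fun_prop)
    zero_le_one
    (fun i => by simpa using integrable_exp_sum_log_mul (hmeas i) (hnonneg i) (hsimplex i) hc)
    (fun i => (mgf_sum_log_mul_le (hmeas i) (hnonneg i) (hsimplex i) hc).trans_eq <| by
      simp_rw [hmean]; exact one_add_sum_lowerTiltWeight_sub_one_mul hμpos hzpos hμsum hzsum)
    (n * ∑ ℓ, log (c ℓ) * z ℓ.succ)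
  calc ℙ {ω | ∀ ℓ : Fin k, (∑ i, X i ω ℓ) / n ≤ z ℓ.succ}
      ≤ ℙ {ω | n * ∑ ℓ, log (c ℓ) * z ℓ.succ ≤ ∑ i, ∑ ℓ, log (c ℓ) * X i ω ℓ} :=
        measure_mono fun ω hω => by
          simpa using card_mul_sum_mul_le_sum_sum_mul (x := fun i ℓ => X i ω ℓ) hlog_c
            (by simpa using hω)
    _ ≤ ENNReal.ofReal ((∏ i, (μ i / z i) ^ (z i)) ^ n) := by
        rw [← ofReal_measureReal]
        refine ENNReal.ofReal_le_ofReal (hchernoff.trans_eq ?_)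
        rw [← exp_neg_sum_log_lowerTiltWeight_mul hμpos hzpos hzsum, mul_pow, ← exp_nat_mul,
          Fintype.card_fin, mul_neg, neg_one_mul]

/-- Concentration inequality (lower tail) for i.i.d. random vectors in the simplex
whose coordinate means are `μ i = α i / ∑ α` (as for the Dirichlet distribution
with parameter `α`): if `z ≤ μ` componentwise, then
`Pr{X̄ₙ ≤ z} ≤ (∏_{i=0}^k (μ i / z i)^(z i))^n`. -/
theorem dirichlet_concentration_le
    {Ω : Type*} [MeasureSpace Ω] [IsProbabilityMeasure (ℙ : Measure Ω)]
    (n k : ℕ) (hn : 0 < n)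
    (α : Fin (k + 1) → ℝ) (hα : ∀ i, 0 < α i)
    (μ : Fin (k + 1) → ℝ) (hμ : ∀ i, μ i = α i / ∑ l, α l)
    (X : Fin n → Ω → Fin k → ℝ)
    (hmeas : ∀ i, Measurable (X i))
    (hindep : iIndepFun X ℙ)
    (hident : ∀ i j, IdentDistrib (X i) (X j) ℙ ℙ)
    (hnonneg : ∀ i ℓ ω, 0 ≤ X i ω ℓ)
    (hsimplex : ∀ i ω, ∑ ℓ, X i ω ℓ ≤ 1)
    (hmean : ∀ (i : Fin n) (ℓ : Fin k), ∫ ω, X i ω ℓ = μ ℓ.succ)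
    (z : Fin (k + 1) → ℝ) (hzpos : ∀ i, 0 < z i) (hzsum : ∑ i, z i = 1)
    (hzμ : ∀ ℓ : Fin k, z ℓ.succ ≤ μ ℓ.succ) :
    ℙ {ω | ∀ ℓ : Fin k, (∑ i, X i ω ℓ) / n ≤ z ℓ.succ} ≤
      ENNReal.ofReal ((∏ i, (μ i / z i) ^ (z i)) ^ n) :=
  dirichlet_concentration_le_general n k α hα μ hμ X hmeas hindep hnonneg hsimplex hmean z hzpos
    hzsum hzμ
end

section
/- Let α_0, α_1, ..., α_k be positive reals and let μ_i = α_i / Σ_{ℓ=0}^k α_ℓ for i = 0, 1, ..., k. Let X_1, ..., X_n be independent identically distributed random vectors of dimension k, each taking values in the probability simplex {x ∈ R^k : x_ℓ ≥ 0, Σ_{ℓ=1}^k x_ℓ ≤ 1} and satisfying E[X_{ℓ,i}] = μ_ℓ for ℓ = 1, ..., k (as holds when (X_{0,i}, X_{1,i}, ..., X_{k,i}) is Dirichlet distributed with parameter (α_0, ..., α_k)). Let X̄_n = (1/n) Σ_{i=1}^n X_i. Let z_0, z_1, ..., z_k be positive reals with Σ_{ℓ=0}^k z_ℓ = 1, and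 suppose z_ℓ ≥ μ_ℓ for all ℓ = 1, ..., k. Then Pr{X̄_n ≥ z componentwise} ≤ [∏_{i=0}^k (μ_i / z_i)^{z_i}]^n, where z = (z_1, ..., z_k). -/
/-!
Chernoff's method with the tilt `t ℓ = log (r 0 / r ℓ)` (`ℓ = 1, …, k`), where `r i = μ i / z i`;
it is nonnegative because `μ ℓ ≤ z ℓ` for `ℓ ≥ 1` forces `z 0 ≤ μ 0`. A point `x` of the simplex is
the convex combination of the vertices `0, e₁, …, e_k` with weights `1 - ∑ x, x₁, …, x_k`, so
convexity of `exp` bounds `E exp ⟪t, Xᵢ⟫` by `μ 0 + ∑ μ ℓ exp (t ℓ) = r 0`. Chernoff's bound for the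
independent sum `∑ᵢ ⟪t, Xᵢ⟫` at level `n ⟪t, z⟫` then gives `(exp (-⟪t, z⟫) r 0) ^ n`, and
`exp (-⟪t, z⟫) r 0 = ∏ r i ^ z i` because `∑ z = 1`.
-/

open MeasureTheory ProbabilityTheory Finset Real

lemma exp_sum_mul_le_of_mem_simplex {ι : Type*} [Fintype ι] {x : ι → ℝ} (hx₀ : ∀ i, 0 ≤ x i)
    (hx₁ : ∑ i, x i ≤ 1) (t : ι → ℝ) :
    exp (∑ i, t i * x i) ≤ (1 - ∑ i, x i) + ∑ i, x i * exp (t i) := by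
  have h := convexOn_exp.map_sum_le (t := univ) (w := fun j : Option ι => j.elim (1 - ∑ i, x i) x)
    (p := fun j : Option ι => j.elim 0 t) (by rintro (_ | i) _ <;> simp [hx₀, hx₁])
    (by simp [Fintype.sum_option]) (by simp)
  simpa [Fintype.sum_option, mul_comm] using h

section Simplex

variable {Ω ι : Type*} [MeasurableSpace Ω] {P : Measure Ω} [Fintype ι] {Y : Ω → ι → ℝ}

lemma integrable_apply_of_mem_simplex [IsFiniteMeasure P] (hY : AEMeasurable Y P)
    (hY₀ : ∀ ω i, 0 ≤ Y ω i) (hY₁ : ∀ ω, ∑ i, Y ω i ≤ 1) (i : ι) :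
    Integrable (fun ω => Y ω i) P := by
  refine Integrable.of_bound (hY.eval i).aestronglyMeasurable 1 (ae_of_all _ fun ω => ?_)
  rw [Real.norm_of_nonneg (hY₀ ω i)]
  exact (single_le_sum (fun j _ => hY₀ ω j) (mem_univ i)).trans (hY₁ ω)

lemma integrable_exp_sum_mul_of_mem_simplex [IsFiniteMeasure P] (hY : AEMeasurable Y P)
    (hY₀ : ∀ ω i, 0 ≤ Y ω i) (hY₁ : ∀ ω, ∑ i, Y ω i ≤ 1) (t : ι → ℝ) :
    Integrable (fun ω => exp (∑ i, t i * Y ω i)) P := by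
  have hYi := integrable_apply_of_mem_simplex hY hY₀ hY₁
  have hbound : Integrable (fun ω => (1 - ∑ i, Y ω i) + ∑ i, Y ω i * exp (t i)) P :=
    ((integrable_const 1).sub (integrable_finsetSum _ fun i _ => hYi i)).add
      (integrable_finsetSum _ fun i _ => (hYi i).mul_const _)
  refine hbound.mono' (by fun_prop) (ae_of_all _ fun ω => ?_)
  rw [Real.norm_of_nonneg (exp_nonneg _)]
  exact exp_sum_mul_le_of_mem_simplex (hY₀ ω) (hY₁ ω) t

lemma mgf_sum_mul_le_of_mem_simplex [IsProbabilityMeasure P] (hY : AEMeasurable Y P)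
    (hY₀ : ∀ ω i, 0 ≤ Y ω i) (hY₁ : ∀ ω, ∑ i, Y ω i ≤ 1) (t : ι → ℝ) :
    mgf (fun ω => ∑ i, t i * Y ω i) P 1 ≤
      (1 - ∑ i, ∫ ω, Y ω i ∂P) + ∑ i, (∫ ω, Y ω i ∂P) * exp (t i) := by
  have hYi := integrable_apply_of_mem_simplex hY hY₀ hY₁
  have hsum : Integrable (fun ω => ∑ i, Y ω i) P := integrable_finsetSum _ fun i _ => hYi i
  have hmass : Integrable (fun ω => 1 - ∑ i, Y ω i) P := (integrable_const 1).sub hsum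
  have hsum_exp : Integrable (fun ω => ∑ i, Y ω i * exp (t i)) P :=
    integrable_finsetSum _ fun i _ => (hYi i).mul_const _
  calc mgf (fun ω => ∑ i, t i * Y ω i) P 1
      ≤ ∫ ω, (1 - ∑ i, Y ω i) + ∑ i, Y ω i * exp (t i) ∂P :=
        integral_mono
          (by simpa only [one_mul] using integrable_exp_sum_mul_of_mem_simplex hY hY₀ hY₁ t)
          (hmass.add hsum_exp) fun ω => by
            simpa only [one_mul] using exp_sum_mul_le_of_mem_simplex (hY₀ ω) (hY₁ ω) t
    _ = (1 - ∑ i, ∫ ω, Y ω i ∂P) + ∑ i, (∫ ω, Y ω i ∂P) * exp (t i) := by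
        rw [integral_add hmass hsum_exp, integral_sub (integrable_const 1) hsum,
          integral_finsetSum _ fun i _ => hYi i,
          integral_finsetSum _ fun i _ => (hYi i).mul_const _]
        simp [integral_mul_const]

end Simplex

lemma measureReal_sum_ge_le_of_iIndepFun_of_mgf_le {Ω ι : Type*} [MeasurableSpace Ω]
    {μ : Measure Ω} {X : ι → Ω → ℝ} (h_indep : iIndepFun X μ) (h_meas : ∀ i, Measurable (X i))
    {s : Finset ι} {t M : ℝ} (ht : 0 ≤ t)
    (h_int : ∀ i ∈ s, Integrable (fun ω => exp (t * X i ω)) μ)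
    (h_mgf : ∀ i ∈ s, mgf (X i) μ t ≤ M) (ε : ℝ) :
    μ.real {ω | ε ≤ ∑ i ∈ s, X i ω} ≤ exp (-t * ε) * M ^ #s := by
  have := h_indep.isProbabilityMeasure
  calc μ.real {ω | ε ≤ ∑ i ∈ s, X i ω} ≤ exp (-t * ε) * mgf (∑ i ∈ s, X i) μ t := by
        simpa only [Finset.sum_apply] using
          measure_ge_le_exp_mul_mgf ε ht (h_indep.integrable_exp_mul_sum h_meas h_int)
    _ = exp (-t * ε) * ∏ i ∈ s, mgf (X i) μ t := by rw [h_indep.mgf_sum h_meas]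
    _ ≤ exp (-t * ε) * M ^ #s := by
        gcongr
        exact (prod_le_prod (fun i _ => mgf_nonneg) h_mgf).trans_eq (prod_const M)

lemma natCast_mul_sum_mul_le_sum_sum_mul {ι : Type*} [Fintype ι] {n : ℕ} {x : Fin n → ι → ℝ}
    {t z : ι → ℝ} (hx : ∀ i ℓ, 0 ≤ x i ℓ) (ht : ∀ ℓ, 0 ≤ t ℓ)
    (hz : ∀ ℓ, z ℓ ≤ (∑ i, x i ℓ) / n) :
    n * ∑ ℓ, t ℓ * z ℓ ≤ ∑ i, ∑ ℓ, t ℓ * x i ℓ :=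
  calc (n : ℝ) * ∑ ℓ, t ℓ * z ℓ = ∑ ℓ, t ℓ * (z ℓ * n) := by
        rw [mul_sum]; exact sum_congr rfl fun ℓ _ => by ring
    _ ≤ ∑ ℓ, t ℓ * ∑ i, x i ℓ := sum_le_sum fun ℓ _ => mul_le_mul_of_nonneg_left
        (mul_le_of_le_div₀ (sum_nonneg fun i _ => hx i ℓ) n.cast_nonneg (hz ℓ)) (ht ℓ)
    _ = ∑ i, ∑ ℓ, t ℓ * x i ℓ := by simp only [mul_sum]; exact sum_comm

section Tilt

variable {k : ℕ} {μ z : Fin (k + 1) → ℝ}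

noncomputable def chernoffTilt (μ z : Fin (k + 1) → ℝ) (ℓ : Fin k) : ℝ :=
  log (μ 0 / z 0 / (μ ℓ.succ / z ℓ.succ))

lemma chernoffTilt_nonneg (hμ : ∀ i, 0 < μ i) (hz : ∀ i, 0 < z i) (hμ₁ : ∑ i, μ i = 1)
    (hz₁ : ∑ i, z i = 1) (hzμ : ∀ ℓ : Fin k, μ ℓ.succ ≤ z ℓ.succ) (ℓ : Fin k) :
    0 ≤ chernoffTilt μ z ℓ := by
  have hz₀ : z 0 ≤ μ 0 := by
    rw [Fin.sum_univ_succ] at hμ₁ hz₁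
    linarith [sum_le_sum fun ℓ (_ : ℓ ∈ univ) => hzμ ℓ]
  refine log_nonneg ((one_le_div (div_pos (hμ _) (hz _))).2 ?_)
  calc μ ℓ.succ / z ℓ.succ ≤ 1 := (div_le_one (hz _)).2 (hzμ ℓ)
    _ ≤ μ 0 / z 0 := (one_le_div (hz 0)).2 hz₀

lemma exp_chernoffTilt (hμ : ∀ i, 0 < μ i) (hz : ∀ i, 0 < z i) (ℓ : Fin k) :
    exp (chernoffTilt μ z ℓ) = μ 0 / z 0 / (μ ℓ.succ / z ℓ.succ) :=
  exp_log (by have := hμ 0; have := hz 0; have := hμ ℓ.succ; have := hz ℓ.succ; positivity)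

lemma one_sub_sum_add_sum_mul_exp_chernoffTilt (hμ : ∀ i, 0 < μ i) (hz : ∀ i, 0 < z i)
    (hμ₁ : ∑ i, μ i = 1) (hz₁ : ∑ i, z i = 1) :
    (1 - ∑ ℓ : Fin k, μ ℓ.succ) + ∑ ℓ, μ ℓ.succ * exp (chernoffTilt μ z ℓ) = μ 0 / z 0 := by
  have hterm : ∀ ℓ : Fin k, μ ℓ.succ * exp (chernoffTilt μ z ℓ) = μ 0 / z 0 * z ℓ.succ := by
    intro ℓ
    rw [exp_chernoffTilt hμ hz]
    field_simp [(hμ ℓ.succ).ne', (hz ℓ.succ).ne']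
  rw [Fin.sum_univ_succ] at hμ₁ hz₁
  rw [sum_congr rfl fun ℓ _ => hterm ℓ, ← mul_sum, show ∑ ℓ : Fin k, μ ℓ.succ = 1 - μ 0 by linarith,
    show ∑ ℓ : Fin k, z ℓ.succ = 1 - z 0 by linarith]
  field_simp [(hz 0).ne']
  ring

lemma exp_neg_sum_chernoffTilt_mul (hμ : ∀ i, 0 < μ i) (hz : ∀ i, 0 < z i) (hz₁ : ∑ i, z i = 1) :
    exp (-∑ ℓ : Fin k, chernoffTilt μ z ℓ * z ℓ.succ) * (μ 0 / z 0) = ∏ i, (μ i / z i) ^ z i := by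
  have hr : ∀ i, 0 < μ i / z i := fun i => div_pos (hμ i) (hz i)
  have htilt : ∀ ℓ : Fin k,
      chernoffTilt μ z ℓ = log (μ 0 / z 0) - log (μ ℓ.succ / z ℓ.succ) := fun ℓ =>
    log_div (hr 0).ne' (hr ℓ.succ).ne'
  rw [Fin.sum_univ_succ] at hz₁
  calc exp (-∑ ℓ : Fin k, chernoffTilt μ z ℓ * z ℓ.succ) * (μ 0 / z 0)
      = exp (-∑ ℓ : Fin k, chernoffTilt μ z ℓ * z ℓ.succ + log (μ 0 / z 0)) := by
        rw [exp_add, exp_log (hr 0)]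
    _ = exp (∑ i, z i * log (μ i / z i)) := by
        rw [Fin.sum_univ_succ]
        simp only [htilt, sub_mul, sum_sub_distrib, ← sum_mul, mul_comm (log _)]
        congr 1
        linear_combination (-log (μ 0 / z 0)) * hz₁
    _ = ∏ i, (μ i / z i) ^ z i := by
        rw [exp_sum]
        exact prod_congr rfl fun i _ => by rw [rpow_def_of_pos (hr i), mul_comm]

end Tilt

theorem dirichlet_concentration_ge_general
    {Ω : Type*} [MeasureSpace Ω] [IsProbabilityMeasure (ℙ : Measure Ω)]
    (n k : ℕ)
    (α : Fin (k + 1) → ℝ) (hα : ∀ i, 0 < α i)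
    (μ : Fin (k + 1) → ℝ) (hμ : ∀ i, μ i = α i / ∑ l, α l)
    (X : Fin n → Ω → Fin k → ℝ)
    (hmeas : ∀ i, Measurable (X i))
    (hindep : iIndepFun X ℙ)
    (hnonneg : ∀ i ℓ ω, 0 ≤ X i ω ℓ)
    (hsimplex : ∀ i ω, ∑ ℓ, X i ω ℓ ≤ 1)
    (hmean : ∀ (i : Fin n) (ℓ : Fin k), ∫ ω, X i ω ℓ = μ ℓ.succ)
    (z : Fin (k + 1) → ℝ) (hzpos : ∀ i, 0 < z i) (hzsum : ∑ i, z i = 1)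
    (hzμ : ∀ ℓ : Fin k, μ ℓ.succ ≤ z ℓ.succ) :
    ℙ {ω | ∀ ℓ : Fin k, z ℓ.succ ≤ (∑ i, X i ω ℓ) / n} ≤
      ENNReal.ofReal ((∏ i, (μ i / z i) ^ (z i)) ^ n) := by
  have hαsum : 0 < ∑ l, α l := sum_pos (fun i _ => hα i) univ_nonempty
  have hμpos : ∀ i, 0 < μ i := fun i => hμ i ▸ div_pos (hα i) hαsum
  have hμsum : ∑ i, μ i = 1 := by simp_rw [hμ, ← sum_div, div_self hαsum.ne']
  set t := chernoffTilt μ z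
  have ht : ∀ ℓ, 0 ≤ t ℓ := chernoffTilt_nonneg hμpos hzpos hμsum hzsum hzμ
  set V : Fin n → Ω → ℝ := fun i ω => ∑ ℓ, t ℓ * X i ω ℓ
  have hVmeas : ∀ i, Measurable (V i) := fun i => by fun_prop
  have hVindep : iIndepFun V ℙ := hindep.comp (fun _ x => ∑ ℓ, t ℓ * x ℓ) fun _ => by fun_prop
  have hVint : ∀ i ∈ univ, Integrable (fun ω => exp (1 * V i ω)) ℙ := fun i _ => by
    simpa only [one_mul] using integrable_exp_sum_mul_of_mem_simplex (hmeas i).aemeasurable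
      (fun ω ℓ => hnonneg i ℓ ω) (hsimplex i) t
  have hVmgf : ∀ i ∈ univ, mgf (V i) ℙ 1 ≤ μ 0 / z 0 := fun i _ => by
    have := mgf_sum_mul_le_of_mem_simplex (P := ℙ) (hmeas i).aemeasurable
      (fun ω ℓ => hnonneg i ℓ ω) (hsimplex i) t
    simp only [hmean i] at this
    exact this.trans_eq (one_sub_sum_add_sum_mul_exp_chernoffTilt hμpos hzpos hμsum hzsum)
  have hevent : {ω | ∀ ℓ : Fin k, z ℓ.succ ≤ (∑ i, X i ω ℓ) / n} ⊆
      {ω | n * ∑ ℓ, t ℓ * z ℓ.succ ≤ ∑ i, V i ω} := fun ω hω =>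
    natCast_mul_sum_mul_le_sum_sum_mul (fun i ℓ => hnonneg i ℓ ω) ht hω
  calc ℙ {ω | ∀ ℓ : Fin k, z ℓ.succ ≤ (∑ i, X i ω ℓ) / n}
      ≤ ℙ {ω | n * ∑ ℓ, t ℓ * z ℓ.succ ≤ ∑ i, V i ω} := measure_mono hevent
    _ = ENNReal.ofReal ((ℙ : Measure Ω).real {ω | n * ∑ ℓ, t ℓ * z ℓ.succ ≤ ∑ i, V i ω}) :=
        (ofReal_measureReal).symm
    _ ≤ ENNReal.ofReal (exp (-1 * (n * ∑ ℓ, t ℓ * z ℓ.succ)) * (μ 0 / z 0) ^ n) := by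
        gcongr
        simpa using measureReal_sum_ge_le_of_iIndepFun_of_mgf_le hVindep hVmeas zero_le_one
          hVint hVmgf (n * ∑ ℓ, t ℓ * z ℓ.succ)
    _ = ENNReal.ofReal ((∏ i, (μ i / z i) ^ (z i)) ^ n) := by
        rw [neg_one_mul, ← mul_neg, exp_nat_mul, ← mul_pow,
          exp_neg_sum_chernoffTilt_mul hμpos hzpos hzsum]

/-- Concentration inequality (upper tail) for i.i.d. random vectors in the simplex
whose coordinate means are `μ i = α i / ∑ α` (as for the Dirichlet distribution
with parameter `α`): if `μ ≤ z` componentwise, then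
`Pr{X̄ₙ ≥ z} ≤ (∏_{i=0}^k (μ i / z i)^(z i))^n`. -/
theorem dirichlet_concentration_ge
    {Ω : Type*} [MeasureSpace Ω] [IsProbabilityMeasure (ℙ : Measure Ω)]
    (n k : ℕ) (hn : 0 < n)
    (α : Fin (k + 1) → ℝ) (hα : ∀ i, 0 < α i)
    (μ : Fin (k + 1) → ℝ) (hμ : ∀ i, μ i = α i / ∑ l, α l)
    (X : Fin n → Ω → Fin k → ℝ)
    (hmeas : ∀ i, Measurable (X i))
    (hindep : iIndepFun X ℙ)
    (hident : ∀ i j, IdentDistrib (X i) (X j) ℙ ℙ)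
    (hnonneg : ∀ i ℓ ω, 0 ≤ X i ω ℓ)
    (hsimplex : ∀ i ω, ∑ ℓ, X i ω ℓ ≤ 1)
    (hmean : ∀ (i : Fin n) (ℓ : Fin k), ∫ ω, X i ω ℓ = μ ℓ.succ)
    (z : Fin (k + 1) → ℝ) (hzpos : ∀ i, 0 < z i) (hzsum : ∑ i, z i = 1)
    (hzμ : ∀ ℓ : Fin k, μ ℓ.succ ≤ z ℓ.succ) :
    ℙ {ω | ∀ ℓ : Fin k, z ℓ.succ ≤ (∑ i, X i ω ℓ) / n} ≤
      ENNReal.ofReal ((∏ i, (μ i / z i) ^ (z i)) ^ n) :=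
  dirichlet_concentration_ge_general n k α hα μ hμ X hmeas hindep hnonneg hsimplex hmean z hzpos
    hzsum hzμ
end

section
/- Let x_1, ..., x_k be nonnegative real numbers with Σ_{ℓ=1}^k x_ℓ ≤ 1. Then for arbitrary real numbers t_1, ..., t_k, ∏_{ℓ=1}^k exp(t_ℓ x_ℓ) ≤ 1 − Σ_{ℓ=1}^k x_ℓ + Σ_{ℓ=1}^k x_ℓ exp(t_ℓ). -/
open Finset

/-- For nonnegative `x₁, ..., x_k` with `∑ x_ℓ ≤ 1` and arbitrary reals `t₁, ..., t_k`,
`∏ exp(t_ℓ x_ℓ) ≤ 1 − ∑ x_ℓ + ∑ x_ℓ exp(t_ℓ)`. -/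
theorem prod_exp_le (k : ℕ) (x t : Fin k → ℝ)
    (hx : ∀ ℓ, 0 ≤ x ℓ) (hsum : ∑ ℓ, x ℓ ≤ 1) :
    ∏ ℓ, Real.exp (t ℓ * x ℓ) ≤ 1 - ∑ ℓ, x ℓ + ∑ ℓ, x ℓ * Real.exp (t ℓ) := by
  -- Jensen for `exp` with the weights `x ℓ` at the points `t ℓ`, and the remaining weight at `0`.
  have h := convexOn_exp.map_add_sum_le (fun ℓ _ => hx ℓ) (sub_add_cancel 1 (∑ ℓ, x ℓ))
    (fun ℓ _ => Set.mem_univ (t ℓ)) (sub_nonneg.2 hsum) (Set.mem_univ 0)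
  simpa [← Real.exp_sum, mul_comm] using h
end
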